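/- Let $N\ge3$ and $0<\gamma<\beta$, and let $\rho:[0,\infty)\to[0,\infty)$ be measurable with $(1+s)^{\gamma}\le\rho(s)\le(1+s)^{\beta}$ for all $s\ge0$. Define $S_{\rho}=\inf\Big\{\int_{\mathbb{R}^N_+}\rho(x_N)|\nabla u|^2\,dx\ :\ u\in C_c^\infty(\mathbb{R}^N),\ \int_{\mathbb{R}^{N-1}}|u(x',0)|^{2_*}\,dx'=1\Big\}$ and $S_{\partial}=\inf\Big\{\int_{\mathbb{R}^N_+}|\nabla u|^2\,dx\ :\ u\in C_c^\infty(\mathbb{R}^N),\ \int_{\mathbb{R}^{N-1}}|u(x',0)|^{2_*}\,dx'=1\Big\}$. Then $S_{\rho}=S_{\partial}$. -/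

import Mathlib

open MeasureTheory Filter
open scoped Topology ENNReal

noncomputable section

/-- The last coordinate of a point of `ℝ^N`. -/
def xN (N : ℕ) (hN : 0 < N) (x : EuclideanSpace ℝ (Fin N)) : ℝ :=
  x ⟨N - 1, Nat.sub_lt hN Nat.one_pos⟩

/-- The open upper half-space `ℝ^N₊`. -/
def Hplus (N : ℕ) (hN : 0 < N) : Set (EuclideanSpace ℝ (Fin N)) :=
  {x | 0 < xN N hN x}

/-- The point `(y, t) ∈ ℝ^N` with horizontal part `y ∈ ℝ^(N-1)` and last coordinate `t`. -/
def mkPt (N : ℕ) (y : EuclideanSpace ℝ (Fin (N - 1))) (t : ℝ) :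
    EuclideanSpace ℝ (Fin N) :=
  (WithLp.equiv 2 (Fin N → ℝ)).symm fun i => if h : (i : ℕ) < N - 1 then y ⟨(i : ℕ), h⟩ else t

/-- The boundary point `(y, 0)`. -/
def bPt (N : ℕ) (y : EuclideanSpace ℝ (Fin (N - 1))) : EuclideanSpace ℝ (Fin N) :=
  mkPt N y 0

/-- Partial derivative of `u` in the `i`-th coordinate direction. -/
def pd (N : ℕ) (u : EuclideanSpace ℝ (Fin N) → ℝ) (i : Fin N)
    (x : EuclideanSpace ℝ (Fin N)) : ℝ :=
  fderiv ℝ u x (EuclideanSpace.single i 1)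

/-- `div (w ∇u)` written as a sum of coordinate partial derivatives. -/
def divW (N : ℕ) (w u : EuclideanSpace ℝ (Fin N) → ℝ)
    (x : EuclideanSpace ℝ (Fin N)) : ℝ :=
  ∑ i, pd N (fun z => w z * pd N u i z) i x

/-! Since `ρ ≥ 1` on `[0, ∞)`, every weighted energy dominates the unweighted one, so `S_∂ ≤ S_ρ`.
Conversely, the critical dilation `u_r(x) = r^((N-2)/2) u(r x)` preserves the boundary
`L^{2_*}` integral and turns the weighted energy of `u_r` into `∫ ρ(x_N / r) |∇u|²`. If the support
of `u` lies in the ball of radius `M`, this weight is at most `(1 + M/r)^β → 1` as `r → ∞` there,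
so `S_ρ ≤ S_∂`. -/

open Metric
open scoped Pointwise

section HalfSpace

variable {N : ℕ}

lemma xN_smul (hN : 0 < N) (r : ℝ) (x : EuclideanSpace ℝ (Fin N)) :
    xN N hN (r • x) = r * xN N hN x := rfl

lemma xN_le_norm (hN : 0 < N) (x : EuclideanSpace ℝ (Fin N)) : xN N hN x ≤ ‖x‖ :=
  (le_abs_self _).trans (PiLp.norm_apply_le x _)

lemma continuous_xN (hN : 0 < N) : Continuous (xN N hN) :=
  (EuclideanSpace.proj (𝕜 := ℝ) (⟨N - 1, Nat.sub_lt hN Nat.one_pos⟩ : Fin N)).continuous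

lemma measurableSet_Hplus (hN : 0 < N) : MeasurableSet (Hplus N hN) :=
  (isOpen_lt continuous_const (continuous_xN hN)).measurableSet

lemma smul_Hplus (hN : 0 < N) {r : ℝ} (hr : 0 < r) : r • Hplus N hN = Hplus N hN := by
  ext x
  constructor
  · rintro ⟨y, hy, rfl⟩
    simpa [Hplus, xN_smul] using mul_pos hr hy
  · intro hx
    refine ⟨r⁻¹ • x, ?_, smul_inv_smul₀ hr.ne' x⟩
    simpa [Hplus, xN_smul] using mul_pos (inv_pos.2 hr) hx

lemma bPt_smul (r : ℝ) (y : EuclideanSpace ℝ (Fin (N - 1))) : bPt N (r • y) = r • bPt N y := by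
  ext i
  simp only [bPt, mkPt, WithLp.equiv_symm_apply, PiLp.toLp_apply, PiLp.smul_apply, smul_eq_mul]
  split <;> simp

lemma bPt_zero : bPt N 0 = 0 := by
  simpa using bPt_smul (N := N) 0 0

lemma continuous_bPt : Continuous (bPt N) := by
  refine (PiLp.continuous_toLp 2 (fun _ : Fin N => ℝ)).comp (continuous_pi fun i => ?_)
  by_cases h : (i : ℕ) < N - 1
  · simpa [h] using (EuclideanSpace.proj (𝕜 := ℝ) (⟨(i : ℕ), h⟩ : Fin (N - 1))).continuous
  · simpa [h] using continuous_const

lemma norm_le_norm_bPt (y : EuclideanSpace ℝ (Fin (N - 1))) : ‖y‖ ≤ ‖bPt N y‖ := by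
  rw [EuclideanSpace.norm_eq, EuclideanSpace.norm_eq]
  apply Real.sqrt_le_sqrt
  let emb : Fin (N - 1) → Fin N := fun j => ⟨j, lt_of_lt_of_le j.2 (Nat.sub_le N 1)⟩
  have hemb : ∑ j, ‖y j‖ ^ 2 = ∑ i ∈ Finset.univ.image emb, ‖bPt N y i‖ ^ 2 := by
    rw [Finset.sum_image fun a _ b _ hab => Fin.val_injective (by simpa [emb] using hab)]
    exact Finset.sum_congr rfl fun j _ => by simp [emb, bPt, mkPt, j.2]
  rw [hemb]
  exact Finset.sum_le_sum_of_subset_of_nonneg (Finset.subset_univ _) fun _ _ _ => by positivity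

lemma HasCompactSupport.comp_bPt {f : EuclideanSpace ℝ (Fin N) → ℝ} (hf : HasCompactSupport f) :
    HasCompactSupport fun y => f (bPt N y) := by
  obtain ⟨R, hR⟩ := hf.isBounded.subset_closedBall 0
  refine HasCompactSupport.intro (isCompact_closedBall 0 R) fun y hy => ?_
  by_contra h
  have hyR : ‖bPt N y‖ ≤ R := by simpa using hR (subset_tsupport f h)
  exact hy (by simpa using (norm_le_norm_bPt y).trans hyR)

end HalfSpace

section Gradient

variable {E : Type*} [NormedAddCommGroup E] [InnerProductSpace ℝ E] [CompleteSpace E]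

lemma norm_gradient (f : E → ℝ) (x : E) : ‖gradient f x‖ = ‖fderiv ℝ f x‖ :=
  (InnerProductSpace.toDual ℝ E).symm.norm_map _

lemma gradient_eq_zero_of_notMem_tsupport {f : E → ℝ} {x : E} (hx : x ∉ tsupport f) :
    gradient f x = 0 := by
  rw [gradient, fderiv_of_notMem_tsupport ℝ hx, map_zero]

lemma gradient_const_mul_comp_smul {u : E → ℝ} (hu : Differentiable ℝ u) (c r : ℝ) (x : E) :
    gradient (fun z => c * u (r • z)) x = (c * r) • gradient u (r • x) := by
  have hsmul : HasFDerivAt (fun z : E => r • z) (r • ContinuousLinearMap.id ℝ E) x :=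
    (r • ContinuousLinearMap.id ℝ E).hasFDerivAt
  have hcomp := ((hu (r • x)).hasFDerivAt.comp x hsmul).const_mul c
  have hlin : c • ((fderiv ℝ u (r • x)).comp (r • ContinuousLinearMap.id ℝ E))
      = (c * r) • fderiv ℝ u (r • x) := by
    ext w
    simp [mul_assoc]
  rw [gradient, show (fun z => c * u (r • z)) = fun z => c * (u ∘ (r • ·)) z from rfl,
    (hcomp.congr_fderiv hlin).fderiv, map_smul]
  rfl

lemma continuous_norm_gradient_sq {u : E → ℝ} (hu : ContDiff ℝ 1 u) :
    Continuous fun x => ‖gradient u x‖ ^ 2 := by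
  simp only [norm_gradient]
  exact ((hu.continuous_fderiv one_ne_zero).norm).pow 2

lemma HasCompactSupport.norm_gradient_sq {u : E → ℝ} (hcs : HasCompactSupport u) :
    HasCompactSupport fun x => ‖gradient u x‖ ^ 2 :=
  HasCompactSupport.intro hcs fun x hx => by
    simp [gradient_eq_zero_of_notMem_tsupport hx]

lemma integrable_norm_gradient_sq {u : E → ℝ} (hu : ContDiff ℝ 1 u) (hcs : HasCompactSupport u)
    [MeasurableSpace E] [BorelSpace E] {μ : Measure E} [IsFiniteMeasureOnCompacts μ] :
    Integrable (fun x => ‖gradient u x‖ ^ 2) μ :=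
  (continuous_norm_gradient_sq hu).integrable_of_hasCompactSupport hcs.norm_gradient_sq

end Gradient

section Trace

def traceExponent (N : ℕ) : ℝ := 2 * ((N : ℝ) - 1) / ((N : ℝ) - 2)

def traceIntegral (N : ℕ) (u : EuclideanSpace ℝ (Fin N) → ℝ) : ℝ :=
  ∫ y : EuclideanSpace ℝ (Fin (N - 1)), |u (bPt N y)| ^ traceExponent N

variable {N : ℕ}

lemma traceExponent_pos (hN : 3 ≤ N) : 0 < traceExponent N := by
  have : (3 : ℝ) ≤ N := by exact_mod_cast hN
  unfold traceExponent
  apply div_pos <;> linarith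

lemma traceIntegral_const_mul (c : ℝ) (u : EuclideanSpace ℝ (Fin N) → ℝ) :
    traceIntegral N (fun x => c * u x) = |c| ^ traceExponent N * traceIntegral N u := by
  simp only [traceIntegral, abs_mul, Real.mul_rpow (abs_nonneg _) (abs_nonneg _)]
  exact integral_const_mul _ _

lemma traceIntegral_comp_smul (r : ℝ) (u : EuclideanSpace ℝ (Fin N) → ℝ) :
    traceIntegral N (fun x => u (r • x)) = |(r ^ (N - 1))⁻¹| * traceIntegral N u := by
  simp only [traceIntegral, ← bPt_smul]
  rw [Measure.integral_comp_smul volume (fun y => |u (bPt N y)| ^ traceExponent N) r,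
    finrank_euclideanSpace_fin, smul_eq_mul]

lemma exists_traceIntegral_eq_one (hN : 3 ≤ N) :
    ∃ u : EuclideanSpace ℝ (Fin N) → ℝ,
      ContDiff ℝ (⊤ : ℕ∞) u ∧ HasCompactSupport u ∧ traceIntegral N u = 1 := by
  have hp := traceExponent_pos hN
  let f : ContDiffBump (0 : EuclideanSpace ℝ (Fin N)) := ⟨1, 2, one_pos, one_lt_two⟩
  have hcont : Continuous fun y => |f (bPt N y)| ^ traceExponent N :=
    ((f.continuous.comp continuous_bPt).abs).rpow_const fun _ => Or.inr hp.le
  have hcs : HasCompactSupport fun y => |f (bPt N y)| ^ traceExponent N :=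
    f.hasCompactSupport.comp_bPt.comp_left (g := fun t => |t| ^ traceExponent N)
      (by simp [Real.zero_rpow hp.ne'])
  have hpos : 0 < traceIntegral N f := by
    refine integral_pos_of_integrable_nonneg_nonzero (x := 0) hcont
      (hcont.integrable_of_hasCompactSupport hcs) (fun y => by positivity) ?_
    simp [bPt_zero, f.one_of_mem_closedBall (mem_closedBall_self f.rIn_pos.le)]
  refine ⟨fun x => traceIntegral N f ^ (-(traceExponent N)⁻¹) * f x,
    contDiff_const.mul f.contDiff, f.hasCompactSupport.mul_left, ?_⟩
  rw [traceIntegral_const_mul, abs_of_pos (by positivity), ← Real.rpow_mul hpos.le, neg_mul,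
    inv_mul_cancel₀ hp.ne', Real.rpow_neg_one, inv_mul_cancel₀ hpos.ne']

end Trace

section Dilation

variable {N : ℕ}

def dilate (N : ℕ) (r : ℝ) (u : EuclideanSpace ℝ (Fin N) → ℝ) (x : EuclideanSpace ℝ (Fin N)) :
    ℝ :=
  r ^ (((N : ℝ) - 2) / 2) * u (r • x)

lemma ContDiff.dilate {n : WithTop ℕ∞} {u : EuclideanSpace ℝ (Fin N) → ℝ} (hu : ContDiff ℝ n u)
    (r : ℝ) : ContDiff ℝ n (dilate N r u) :=
  contDiff_const.mul (hu.comp (contDiff_const_smul r))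

lemma HasCompactSupport.dilate {u : EuclideanSpace ℝ (Fin N) → ℝ} (hu : HasCompactSupport u)
    {r : ℝ} (hr : r ≠ 0) : HasCompactSupport (dilate N r u) :=
  (hu.comp_smul hr).mul_left

lemma traceIntegral_dilate (hN : 3 ≤ N) (u : EuclideanSpace ℝ (Fin N) → ℝ) {r : ℝ} (hr : 0 < r) :
    traceIntegral N (dilate N r u) = traceIntegral N u := by
  have hN' : (3 : ℝ) ≤ N := by exact_mod_cast hN
  have hpow : r ^ (N - 1) = r ^ ((N : ℝ) - 1) := by
    rw [← Real.rpow_natCast, Nat.cast_sub (by omega), Nat.cast_one]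
  have hfactor : |r ^ (((N : ℝ) - 2) / 2)| ^ traceExponent N = r ^ ((N : ℝ) - 1) := by
    rw [abs_of_pos (by positivity), ← Real.rpow_mul hr.le, traceExponent]
    congr 1
    field_simp [show (N : ℝ) - 2 ≠ 0 by linarith]
  unfold dilate
  rw [traceIntegral_const_mul, traceIntegral_comp_smul, ← mul_assoc, hfactor, hpow,
    abs_of_pos (by positivity), mul_inv_cancel₀ (by positivity), one_mul]

lemma gradient_dilate {u : EuclideanSpace ℝ (Fin N) → ℝ} (hu : Differentiable ℝ u) (r : ℝ)
    (x : EuclideanSpace ℝ (Fin N)) :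
    gradient (dilate N r u) x = (r ^ (((N : ℝ) - 2) / 2) * r) • gradient u (r • x) :=
  gradient_const_mul_comp_smul hu _ r x

end Dilation

section Energy

def weightedEnergy (N : ℕ) (hN : 0 < N) (w : ℝ → ℝ) (u : EuclideanSpace ℝ (Fin N) → ℝ) : ℝ :=
  ∫ x in Hplus N hN, w (xN N hN x) * ‖gradient u x‖ ^ 2

def dirichletEnergy (N : ℕ) (hN : 0 < N) (u : EuclideanSpace ℝ (Fin N) → ℝ) : ℝ :=
  ∫ x in Hplus N hN, ‖gradient u x‖ ^ 2

variable {N : ℕ} (hN : 0 < N)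

lemma weightedEnergy_nonneg {w : ℝ → ℝ} (hw : ∀ s, 0 ≤ s → 0 ≤ w s)
    (u : EuclideanSpace ℝ (Fin N) → ℝ) : 0 ≤ weightedEnergy N hN w u :=
  setIntegral_nonneg (measurableSet_Hplus hN) fun x hx =>
    mul_nonneg (hw _ (le_of_lt hx)) (by positivity)

lemma dirichletEnergy_nonneg (u : EuclideanSpace ℝ (Fin N) → ℝ) : 0 ≤ dirichletEnergy N hN u :=
  setIntegral_nonneg (measurableSet_Hplus hN) fun _ _ => by positivity

variable {u : EuclideanSpace ℝ (Fin N) → ℝ}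

lemma weightedEnergy_dilate (w : ℝ → ℝ) (hu : Differentiable ℝ u) {r : ℝ} (hr : 0 < r) :
    weightedEnergy N hN w (dilate N r u) = weightedEnergy N hN (fun s => w (s / r)) u := by
  set c : ℝ := r ^ (((N : ℝ) - 2) / 2)
  set g : EuclideanSpace ℝ (Fin N) → ℝ := fun z => w (xN N hN z / r) * ‖gradient u z‖ ^ 2
  have hscale : (c * r) ^ 2 * |(r ^ N)⁻¹| = 1 := by
    have hc : c ^ 2 = r ^ ((N : ℝ) - 2) := by
      rw [← Real.rpow_natCast, ← Real.rpow_mul hr.le]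
      norm_num
    rw [abs_of_pos (by positivity), mul_pow, hc, Real.rpow_sub hr, Real.rpow_natCast,
      Real.rpow_two]
    field_simp
  have hpointwise : ∀ x, w (xN N hN x) * ‖gradient (dilate N r u) x‖ ^ 2
      = (c * r) ^ 2 * g (r • x) := by
    intro x
    rw [gradient_dilate hu, norm_smul, Real.norm_eq_abs, mul_pow, sq_abs]
    simp only [g, xN_smul, mul_div_cancel_left₀ _ hr.ne']
    ring
  calc weightedEnergy N hN w (dilate N r u)
      = (c * r) ^ 2 * ∫ x in Hplus N hN, g (r • x) := by
        simp only [weightedEnergy, hpointwise]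
        exact integral_const_mul _ _
    _ = (c * r) ^ 2 * |(r ^ N)⁻¹| * ∫ x in Hplus N hN, g x := by
        rw [Measure.setIntegral_comp_smul volume g _ hr.ne', finrank_euclideanSpace_fin,
          smul_Hplus hN hr, smul_eq_mul, mul_assoc]
    _ = weightedEnergy N hN (fun s => w (s / r)) u := by
        rw [hscale, one_mul]
        rfl

variable {w : ℝ → ℝ} {M C : ℝ}

lemma weighted_norm_gradient_sq_le (hwC : ∀ s ∈ Set.Icc 0 M, w s ≤ C)
    (hM : tsupport u ⊆ closedBall 0 M)
    {x : EuclideanSpace ℝ (Fin N)} (hx : x ∈ Hplus N hN) :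
    w (xN N hN x) * ‖gradient u x‖ ^ 2 ≤ C * ‖gradient u x‖ ^ 2 := by
  by_cases hxu : x ∈ tsupport u
  · have hxM : xN N hN x ∈ Set.Icc 0 M :=
      ⟨le_of_lt hx, (xN_le_norm hN x).trans (by simpa using hM hxu)⟩
    gcongr
    exact hwC _ hxM
  · simp [gradient_eq_zero_of_notMem_tsupport hxu]

lemma integrableOn_weighted_norm_gradient_sq (hw : Measurable w) (hw0 : ∀ s, 0 ≤ s → 0 ≤ w s)
    (hwC : ∀ s ∈ Set.Icc 0 M, w s ≤ C) (hu : ContDiff ℝ 1 u) (hcs : HasCompactSupport u)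
    (hM : tsupport u ⊆ closedBall 0 M) :
    IntegrableOn (fun x => w (xN N hN x) * ‖gradient u x‖ ^ 2) (Hplus N hN) := by
  have hmeas : Measurable fun x => w (xN N hN x) * ‖gradient u x‖ ^ 2 :=
    (hw.comp (continuous_xN hN).measurable).mul (continuous_norm_gradient_sq hu).measurable
  refine ((integrable_norm_gradient_sq hu hcs).const_mul C).integrableOn.mono'
    hmeas.aestronglyMeasurable ((ae_restrict_iff' (measurableSet_Hplus hN)).2 ?_)
  filter_upwards with x hx
  rw [Real.norm_eq_abs, abs_of_nonneg (mul_nonneg (hw0 _ (le_of_lt hx)) (by positivity))]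
  exact weighted_norm_gradient_sq_le hN hwC hM hx

lemma weightedEnergy_le (hw : Measurable w) (hw0 : ∀ s, 0 ≤ s → 0 ≤ w s)
    (hwC : ∀ s ∈ Set.Icc 0 M, w s ≤ C) (hu : ContDiff ℝ 1 u) (hcs : HasCompactSupport u)
    (hM : tsupport u ⊆ closedBall 0 M) :
    weightedEnergy N hN w u ≤ C * dirichletEnergy N hN u := by
  calc weightedEnergy N hN w u ≤ ∫ x in Hplus N hN, C * ‖gradient u x‖ ^ 2 :=
        setIntegral_mono_on (integrableOn_weighted_norm_gradient_sq hN hw hw0 hwC hu hcs hM)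
          ((integrable_norm_gradient_sq hu hcs).const_mul C).integrableOn
          (measurableSet_Hplus hN) fun x hx => weighted_norm_gradient_sq_le hN hwC hM hx
    _ = C * dirichletEnergy N hN u := integral_const_mul C _

end Energy

section PowerWeight

variable {N : ℕ} {u : EuclideanSpace ℝ (Fin N) → ℝ} {ρ : ℝ → ℝ} {β : ℝ}

lemma le_one_add_div_rpow_of_mem_Icc (hρβ : ∀ s, 0 ≤ s → ρ s ≤ (1 + s) ^ β) (hβ : 0 ≤ β)
    {M r : ℝ} (hr : 0 < r) : ∀ s ∈ Set.Icc 0 M, ρ (s / r) ≤ (1 + M / r) ^ β := by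
  rintro s ⟨hs0, hsM⟩
  refine (hρβ _ (by positivity)).trans ?_
  gcongr

lemma dirichletEnergy_le_weightedEnergy (hN0 : 0 < N) (hρm : Measurable ρ)
    (hρ1 : ∀ s, 0 ≤ s → 1 ≤ ρ s) (hρβ : ∀ s, 0 ≤ s → ρ s ≤ (1 + s) ^ β) (hβ : 0 ≤ β)
    (hu : ContDiff ℝ 1 u) (hcs : HasCompactSupport u) :
    dirichletEnergy N hN0 u ≤ weightedEnergy N hN0 ρ u := by
  obtain ⟨M, hM⟩ := hcs.isBounded.subset_closedBall 0
  have hρM : ∀ s ∈ Set.Icc 0 M, ρ s ≤ (1 + M) ^ β := by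
    simpa using le_one_add_div_rpow_of_mem_Icc hρβ hβ (M := M) one_pos
  refine setIntegral_mono_on (integrable_norm_gradient_sq hu hcs).integrableOn
    (integrableOn_weighted_norm_gradient_sq hN0 hρm (fun s hs => zero_le_one.trans (hρ1 s hs))
      hρM hu hcs hM) (measurableSet_Hplus hN0) fun x hx => ?_
  exact le_mul_of_one_le_left (by positivity) (hρ1 _ (le_of_lt hx))

end PowerWeight

section TraceConstant

def traceConstant (N : ℕ) (energy : (EuclideanSpace ℝ (Fin N) → ℝ) → ℝ) : ℝ :=
  sInf {E : ℝ | ∃ u : EuclideanSpace ℝ (Fin N) → ℝ,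
    ContDiff ℝ (⊤ : ℕ∞) u ∧ HasCompactSupport u ∧ traceIntegral N u = 1 ∧ E = energy u}

variable {N : ℕ} {energy : (EuclideanSpace ℝ (Fin N) → ℝ) → ℝ} {u : EuclideanSpace ℝ (Fin N) → ℝ}
  {ρ : ℝ → ℝ} {β : ℝ}

lemma traceConstant_le (h0 : ∀ v, 0 ≤ energy v) (hu : ContDiff ℝ (⊤ : ℕ∞) u)
    (hcs : HasCompactSupport u) (htr : traceIntegral N u = 1) : traceConstant N energy ≤ energy u :=
  csInf_le ⟨0, by rintro _ ⟨v, -, -, -, rfl⟩; exact h0 v⟩ ⟨u, hu, hcs, htr, rfl⟩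

lemma le_traceConstant (hN : 3 ≤ N) {a : ℝ}
    (h : ∀ u, ContDiff ℝ (⊤ : ℕ∞) u → HasCompactSupport u → traceIntegral N u = 1 → a ≤ energy u) :
    a ≤ traceConstant N energy := by
  obtain ⟨u₀, hu₀, hcs₀, htr₀⟩ := exists_traceIntegral_eq_one hN
  refine le_csInf ⟨_, u₀, hu₀, hcs₀, htr₀, rfl⟩ ?_
  rintro _ ⟨u, hu, hcs, htr, rfl⟩
  exact h u hu hcs htr

lemma traceConstant_weightedEnergy_le (hN : 3 ≤ N) (hN0 : 0 < N) (hρm : Measurable ρ)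
    (hρ0 : ∀ s, 0 ≤ s → 0 ≤ ρ s) (hρβ : ∀ s, 0 ≤ s → ρ s ≤ (1 + s) ^ β) (hβ : 0 ≤ β)
    (hu : ContDiff ℝ (⊤ : ℕ∞) u) (hcs : HasCompactSupport u) (htr : traceIntegral N u = 1) :
    traceConstant N (weightedEnergy N hN0 ρ) ≤ dirichletEnergy N hN0 u := by
  obtain ⟨M, hM⟩ := hcs.isBounded.subset_closedBall 0
  have hlim : Tendsto (fun r : ℝ => (1 + M / r) ^ β * dirichletEnergy N hN0 u) atTop
      (𝓝 (dirichletEnergy N hN0 u)) := by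
    have hbase : Tendsto (fun r : ℝ => 1 + M / r) atTop (𝓝 1) := by
      simpa using tendsto_const_nhds.add ((tendsto_const_nhds (x := M)).div_atTop tendsto_id)
    simpa using ((Real.continuousAt_rpow_const 1 β (Or.inr hβ)).tendsto.comp hbase).mul_const
      (dirichletEnergy N hN0 u)
  refine ge_of_tendsto hlim ?_
  filter_upwards [eventually_gt_atTop 0] with r hr
  have hu1 : ContDiff ℝ 1 u := hu.of_le (by exact_mod_cast le_top)
  calc traceConstant N (weightedEnergy N hN0 ρ)
      ≤ weightedEnergy N hN0 ρ (dilate N r u) :=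
        traceConstant_le (weightedEnergy_nonneg hN0 hρ0) (hu.dilate r) (hcs.dilate hr.ne')
          (by rwa [traceIntegral_dilate hN u hr])
    _ = weightedEnergy N hN0 (fun s => ρ (s / r)) u :=
        weightedEnergy_dilate hN0 ρ (hu1.differentiable one_ne_zero) hr
    _ ≤ (1 + M / r) ^ β * dirichletEnergy N hN0 u :=
        weightedEnergy_le hN0 (hρm.comp (measurable_id.div_const r))
          (fun s hs => hρ0 _ (div_nonneg hs hr.le)) (le_one_add_div_rpow_of_mem_Icc hρβ hβ hr)
          hu1 hcs hM

end TraceConstant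

theorem stmt3 (N : ℕ) (hN : 3 ≤ N) (γ β : ℝ) (hγ : 0 < γ) (hβ : γ < β)
    (ρ : ℝ → ℝ) (hρm : Measurable ρ)
    (hρ : ∀ s : ℝ, 0 ≤ s → (1 + s) ^ γ ≤ ρ s ∧ ρ s ≤ (1 + s) ^ β) :
    sInf {E : ℝ | ∃ u : EuclideanSpace ℝ (Fin N) → ℝ,
        ContDiff ℝ (⊤ : ℕ∞) u ∧ HasCompactSupport u ∧
        (∫ y : EuclideanSpace ℝ (Fin (N - 1)),
            |u (bPt N y)| ^ (2 * ((N : ℝ) - 1) / ((N : ℝ) - 2))) = 1 ∧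
        E = ∫ x in Hplus N (by omega),
          ρ (xN N (by omega) x) * ‖gradient u x‖ ^ 2} =
    sInf {E : ℝ | ∃ u : EuclideanSpace ℝ (Fin N) → ℝ,
        ContDiff ℝ (⊤ : ℕ∞) u ∧ HasCompactSupport u ∧
        (∫ y : EuclideanSpace ℝ (Fin (N - 1)),
            |u (bPt N y)| ^ (2 * ((N : ℝ) - 1) / ((N : ℝ) - 2))) = 1 ∧
        E = ∫ x in Hplus N (by omega), ‖gradient u x‖ ^ 2} := by
  have hN0 : 0 < N := by omega
  have hβ0 : 0 ≤ β := (hγ.trans hβ).le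
  have hρ1 : ∀ s, 0 ≤ s → 1 ≤ ρ s := fun s hs =>
    (Real.one_le_rpow (by linarith) hγ.le).trans (hρ s hs).1
  have hρ0 : ∀ s, 0 ≤ s → 0 ≤ ρ s := fun s hs => zero_le_one.trans (hρ1 s hs)
  have hρβ : ∀ s, 0 ≤ s → ρ s ≤ (1 + s) ^ β := fun s hs => (hρ s hs).2
  change traceConstant N (weightedEnergy N hN0 ρ) = traceConstant N (dirichletEnergy N hN0)
  apply le_antisymm
  · exact le_traceConstant hN fun u hu hcs htr =>
      traceConstant_weightedEnergy_le hN hN0 hρm hρ0 hρβ hβ0 hu hcs htr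
  · exact le_traceConstant hN fun u hu hcs htr =>
      (traceConstant_le (dirichletEnergy_nonneg hN0) hu hcs htr).trans
        (dirichletEnergy_le_weightedEnergy hN0 hρm hρ1 hρβ hβ0
          (hu.of_le (by exact_mod_cast le_top)) hcs)
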